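/- In the graded ring ℤ[X,Y]/⟨X³, Y⁴ + 2XY³⟩, if (αX + βY)³ = 0 for integers α, β, then β = 0. -/

import Mathlib

open MvPolynomial

noncomputable def RB' : Type :=
  MvPolynomial (Fin 2) ℤ ⧸
    Ideal.span ({(X 0) ^ 3, (X 1) ^ 4 + 2 * X 0 * (X 1) ^ 3} :
      Set (MvPolynomial (Fin 2) ℤ))

noncomputable instance : CommRing RB' := Ideal.Quotient.commRing _

theorem Polynomial.mk_C_mul_X_pow_eq_zero_iff {R : Type*} [CommRing R] {n k : ℕ}
    (hk : k < n) (c : R) :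
    Ideal.Quotient.mk (Ideal.span {Polynomial.X ^ n}) (Polynomial.C c * Polynomial.X ^ k) = 0 ↔
      c = 0 := by
  rw [Ideal.Quotient.eq_zero_iff_mem, Ideal.mem_span_singleton, Polynomial.X_pow_dvd_iff]
  exact ⟨fun h => by simpa using h k hk, fun hc d _ => by simp [hc]⟩

/-- Restriction to a fibre: `X ↦ 0` collapses the relations to `Y⁴ = 0`, the cohomology of `ℂP³`. -/
noncomputable def RB'.toFiber :
    RB' →+* Polynomial ℤ ⧸ Ideal.span {(Polynomial.X : Polynomial ℤ) ^ 4} :=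
  Ideal.Quotient.lift _ ((Ideal.Quotient.mk _).comp (aeval ![0, Polynomial.X]).toRingHom)
    fun _ hp => Ideal.span_le (I := RingHom.ker _) |>.mpr (by rintro p (rfl | rfl) <;> simp) hp

theorem RB'.toFiber_mk (p : MvPolynomial (Fin 2) ℤ) :
    RB'.toFiber (Ideal.Quotient.mk _ p) = Ideal.Quotient.mk _ (aeval ![0, Polynomial.X] p) :=
  rfl

theorem stmt_5 (α β : ℤ)
    (h : (Ideal.Quotient.mk _ (C α * X 0 + C β * X 1) : RB') ^ 3 = 0) :
    β = 0 := by
  have hcube : aeval ![0, Polynomial.X] ((C α * X 0 + C β * X 1) ^ 3) =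
      Polynomial.C (β ^ 3) * Polynomial.X ^ 3 := by
    simp [mul_pow]
  have hfiber : Ideal.Quotient.mk (Ideal.span {Polynomial.X ^ 4})
      (Polynomial.C (β ^ 3) * Polynomial.X ^ 3) = 0 := by
    rw [← hcube, ← RB'.toFiber_mk, map_pow, h]
    exact map_zero _
  rw [Polynomial.mk_C_mul_X_pow_eq_zero_iff (by norm_num)] at hfiber
  exact pow_eq_zero_iff (by norm_num) |>.mp hfiber
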